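/- arXiv:1111.6060 — 2 statements merged into one kernel-verified Lean document; each statement's English description precedes it below -/
import Mathlib

section
/- For integers $k, l, m, j$ with $k - l + m - j = 0$ and $|k| - |l| + |m| - |j| = 0$, exactly one of the following holds: (i) $k > 0$ and ($l, m, j \ge 0$ or $k = l$ or $k = j$); (ii) $k = 0$ and ($l, m, j \ge 0$ or $l, m, j \le 0$); (iii) $k < 0$ and ($l, m, j \le 0$ or $k = l$ or $k = j$). Conversely each of these conditions together with $k - l + m - j = 0$ implies $|k| - |l| + |m| - |j| = 0$. -/
theorem resonant_set_T (k l m j : ℤ) (hlin : k - l + m - j = 0) :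
    |k| - |l| + |m| - |j| = 0 ↔
      (0 < k ∧ ((0 ≤ l ∧ 0 ≤ m ∧ 0 ≤ j) ∨ k = l ∨ k = j)) ∨
      (k = 0 ∧ ((0 ≤ l ∧ 0 ≤ m ∧ 0 ≤ j) ∨ (l ≤ 0 ∧ m ≤ 0 ∧ j ≤ 0))) ∨
      (k < 0 ∧ ((l ≤ 0 ∧ m ≤ 0 ∧ j ≤ 0) ∨ k = l ∨ k = j)) := by
  rcases abs_cases k with ⟨hk, hk'⟩ | ⟨hk, hk'⟩ <;>
  rcases abs_cases l with ⟨hl, hl'⟩ | ⟨hl, hl'⟩ <;>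
  rcases abs_cases m with ⟨hm, hm'⟩ | ⟨hm, hm'⟩ <;>
  rcases abs_cases j with ⟨hj, hj'⟩ | ⟨hj, hj'⟩ <;>
  omega
end

section
/- Let $s > 1/2$. For $W \in H^s(\mathbb{T})$ and $t \in \mathbb{R}$, define $F_{\mathrm{osc}}(W,t)$ via Fourier coefficients $\widehat{F_{\mathrm{osc}}}(W,t)(k) = -\sum \frac{e^{it(|k|-|l|+|m|-|j|)}}{i(|k|-|l|+|m|-|j|)} \hat{W}(j)\hat{W}(l)\overline{\hat{W}(m)}$, the sum being over $(l,m,j)$ with $k - l + m - j = 0$ and $|k|-|l|+|m|-|j| \ne 0$. Then $\|F_{\mathrm{osc}}(W,t)\|_{H^s(\mathbb{T})} \le C_s \|W\|_{H^s(\mathbb{T})}^3$ with $C_s$ depending only on $s$, uniformly in $t$. -/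
/-! Since `|e^{itφ} / (iφ)| ≤ 1` for a nonzero integer `φ`, each coefficient of `F_osc(W,t)` is
bounded by the cubic convolution `(a * a * ǎ)(k) = ∑_{j + l - m = k} a_j a_l a_m` of `a = |Ŵ|`.
As `k = j + l - m`, `⟨k⟩^s ≤ 3^s (⟨j⟩^s + ⟨l⟩^s + ⟨m⟩^s)`, which puts the weight on one factor;
Young's inequality `ℓ² * ℓ¹ * ℓ¹ → ℓ²` then bounds each of the three pieces by
`‖a‖_{Hˢ} ‖a‖_{ℓ¹}²`, and `‖a‖_{ℓ¹}² ≤ (∑ ⟨n⟩^{-2s}) ‖a‖_{Hˢ}²` by Cauchy–Schwarz, the series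
converging because `2s > 1`. All estimates are carried out in `ℝ≥0∞`, where every series
converges. -/

open scoped ComplexConjugate
open Complex

/-- Fourier coefficients of the oscillatory primitive `F_osc(W,t)` on the torus:
the `(l,m)` term has `j = k - l + m` and phase `φ = |k|-|l|+|m|-|j| ≠ 0`. -/
noncomputable def FoscCoeff (W : ℤ → ℂ) (t : ℝ) (k : ℤ) : ℂ :=
  ∑' p : ℤ × ℤ,
    (let l := p.1; let m := p.2; let j := k - l + m;
     let φ : ℤ := |k| - |l| + |m| - |j|;
     if φ ≠ 0 then
       -(Complex.exp (I * t * φ) / (I * φ)) * W j * W l * conj (W m)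
     else 0)

open scoped ENNReal

namespace ENNReal

variable {ι : Type*}

theorem sq_tsum_mul_le (f g : ι → ℝ≥0∞) :
    (∑' i, f i * g i) ^ 2 ≤ (∑' i, f i ^ 2) * ∑' i, g i ^ 2 := by
  let _ : MeasurableSpace ι := ⊤
  have h := lintegral_mul_le_Lp_mul_Lq (MeasureTheory.Measure.count : MeasureTheory.Measure ι)
    .two_two Measurable.of_discrete.aemeasurable Measurable.of_discrete.aemeasurable
    (f := f) (g := g)
  simp only [MeasureTheory.lintegral_count, Pi.mul_apply, rpow_two] at h
  calc _ ≤ ((∑' i, f i ^ 2) ^ (1 / 2 : ℝ) * (∑' i, g i ^ 2) ^ (1 / 2 : ℝ)) ^ 2 := by gcongr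
    _ = _ := by
      rw [mul_pow, ← rpow_two, ← rpow_two, ← rpow_mul, ← rpow_mul]
      norm_num

theorem sq_tsum_mul_le_tsum_sq_mul_mul_tsum (u w : ι → ℝ≥0∞) :
    (∑' i, u i * w i) ^ 2 ≤ (∑' i, u i ^ 2 * w i) * ∑' i, w i := by
  have hw : ∀ i, (w i ^ (1 / 2 : ℝ)) ^ 2 = w i := fun i => by
    rw [← rpow_natCast, ← rpow_mul]; norm_num
  simpa only [mul_pow, mul_assoc, ← sq, hw] using
    sq_tsum_mul_le (fun i => u i * w i ^ (1 / 2 : ℝ)) (fun i => w i ^ (1 / 2 : ℝ))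

theorem sq_tsum_le_tsum_inv_sq_mul_tsum_mul_sq (a v : ι → ℝ≥0∞) (hv₀ : ∀ i, v i ≠ 0)
    (hv : ∀ i, v i ≠ ∞) :
    (∑' i, a i) ^ 2 ≤ (∑' i, (v i)⁻¹ ^ 2) * ∑' i, (v i * a i) ^ 2 := by
  have h : ∀ i, (v i)⁻¹ * (v i * a i) = a i := fun i => by
    rw [← mul_assoc, ENNReal.inv_mul_cancel (hv₀ i) (hv i), one_mul]
  simpa only [h] using sq_tsum_mul_le (fun i => (v i)⁻¹) (fun i => v i * a i)

theorem add_add_sq_le (x y z : ℝ≥0∞) : (x + y + z) ^ 2 ≤ 3 * (x ^ 2 + y ^ 2 + z ^ 2) := by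
  simpa [tsum_fintype, Fin.sum_univ_three, add_assoc, mul_comm] using
    sq_tsum_mul_le ![x, y, z] 1

theorem tsum_mul_tsum {α β : Type*} (f : α → ℝ≥0∞) (g : β → ℝ≥0∞) :
    (∑' a, f a) * ∑' b, g b = ∑' p : α × β, f p.1 * g p.2 := by
  rw [ENNReal.tsum_prod']
  simp only [ENNReal.tsum_mul_left, ENNReal.tsum_mul_right]

theorem tsum_le_of_tsum_ofReal_le {f : ι → ℝ} {R : ℝ} (hf : ∀ i, 0 ≤ f i) (hR : 0 ≤ R)
    (h : ∑' i, ENNReal.ofReal (f i) ≤ ENNReal.ofReal R) : ∑' i, f i ≤ R := by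
  have := toReal_le_of_le_ofReal hR h
  rwa [tsum_toReal_eq fun _ => ofReal_ne_top, tsum_congr fun i => toReal_ofReal (hf i)] at this

end ENNReal

/-- `∑_{j + l - m = k} f j * g l * h m`, indexed by `(l, m)` as in `FoscCoeff`. -/
noncomputable def cubicConv (f g h : ℤ → ℝ≥0∞) (k : ℤ) : ℝ≥0∞ :=
  ∑' p : ℤ × ℤ, f (k - p.1 + p.2) * g p.1 * h p.2

section CubicConv

variable (f g h : ℤ → ℝ≥0∞)

theorem tsum_prod_shift_mul_snd (k : ℤ) :
    ∑' p : ℤ × ℤ, f (k - p.1 + p.2) * h p.2 = (∑' n, f n) * ∑' n, h n := by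
  rw [ENNReal.tsum_prod', ENNReal.tsum_comm, ← ENNReal.tsum_mul_left]
  congr 1 with m
  dsimp only
  rw [ENNReal.tsum_mul_right]
  congr 1
  simpa only [Equiv.subLeft_apply, sub_add_eq_add_sub] using (Equiv.subLeft (k + m)).tsum_eq f

theorem tsum_prod_shift_mul_fst (k : ℤ) :
    ∑' p : ℤ × ℤ, f (k - p.1 + p.2) * g p.1 = (∑' n, f n) * ∑' n, g n := by
  rw [ENNReal.tsum_prod', ← ENNReal.tsum_mul_left]
  congr 1 with l
  dsimp only
  rw [ENNReal.tsum_mul_right]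
  congr 1
  exact (Equiv.addLeft (k - l)).tsum_eq f

theorem tsum_cubicConv :
    ∑' k, cubicConv f g h k = (∑' n, f n) * (∑' n, g n) * ∑' n, h n := by
  simp only [cubicConv]
  rw [ENNReal.tsum_comm, mul_assoc, ENNReal.tsum_mul_tsum, ← ENNReal.tsum_mul_left]
  congr 1 with p
  simp only [mul_assoc]
  rw [ENNReal.tsum_mul_right]
  congr 1
  simpa only [Equiv.coe_addRight, sub_add_eq_add_sub, add_sub_assoc] using
    (Equiv.addRight (p.2 - p.1)).tsum_eq f

theorem tsum_cubicConv_sq_le_fst :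
    ∑' k, cubicConv f g h k ^ 2 ≤ (∑' n, f n ^ 2) * (∑' n, g n) ^ 2 * (∑' n, h n) ^ 2 := by
  have hk : ∀ k, cubicConv f g h k ^ 2 ≤
      cubicConv (fun n => f n ^ 2) g h k * ((∑' n, g n) * ∑' n, h n) := fun k => by
    simpa only [cubicConv, mul_assoc, ENNReal.tsum_mul_tsum] using
      ENNReal.sq_tsum_mul_le_tsum_sq_mul_mul_tsum (fun p : ℤ × ℤ => f (k - p.1 + p.2))
        (fun p => g p.1 * h p.2)
  calc _ ≤ ∑' k, cubicConv (fun n => f n ^ 2) g h k * ((∑' n, g n) * ∑' n, h n) :=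
        ENNReal.tsum_le_tsum hk
    _ = _ := by rw [ENNReal.tsum_mul_right, tsum_cubicConv]; ring

theorem tsum_cubicConv_sq_le_snd :
    ∑' k, cubicConv f g h k ^ 2 ≤ (∑' n, f n) ^ 2 * (∑' n, g n ^ 2) * (∑' n, h n) ^ 2 := by
  have hk : ∀ k, cubicConv f g h k ^ 2 ≤
      cubicConv f (fun n => g n ^ 2) h k * ((∑' n, f n) * ∑' n, h n) := fun k => by
    have := ENNReal.sq_tsum_mul_le_tsum_sq_mul_mul_tsum (fun p : ℤ × ℤ => g p.1)
      (fun p => f (k - p.1 + p.2) * h p.2)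
    rw [tsum_prod_shift_mul_snd] at this
    convert this using 2 <;> exact tsum_congr fun p => by ring
  calc _ ≤ ∑' k, cubicConv f (fun n => g n ^ 2) h k * ((∑' n, f n) * ∑' n, h n) :=
        ENNReal.tsum_le_tsum hk
    _ = _ := by rw [ENNReal.tsum_mul_right, tsum_cubicConv]; ring

theorem tsum_cubicConv_sq_le_thd :
    ∑' k, cubicConv f g h k ^ 2 ≤ (∑' n, f n) ^ 2 * (∑' n, g n) ^ 2 * (∑' n, h n ^ 2) := by
  have hk : ∀ k, cubicConv f g h k ^ 2 ≤
      cubicConv f g (fun n => h n ^ 2) k * ((∑' n, f n) * ∑' n, g n) := fun k => by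
    have := ENNReal.sq_tsum_mul_le_tsum_sq_mul_mul_tsum (fun p : ℤ × ℤ => h p.2)
      (fun p => f (k - p.1 + p.2) * g p.1)
    rw [tsum_prod_shift_mul_fst] at this
    convert this using 2 <;> exact tsum_congr fun p => by ring
  calc _ ≤ ∑' k, cubicConv f g (fun n => h n ^ 2) k * ((∑' n, f n) * ∑' n, g n) :=
        ENNReal.tsum_le_tsum hk
    _ = _ := by rw [ENNReal.tsum_mul_right, tsum_cubicConv]; ring

end CubicConv

theorem Real.rpow_add_add_le {x y z : ℝ} (hx : 0 ≤ x) (hy : 0 ≤ y) (hz : 0 ≤ z) {s : ℝ}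
    (hs : 0 ≤ s) : (x + y + z) ^ s ≤ 3 ^ s * (x ^ s + y ^ s + z ^ s) := by
  have hM : max x (max y z) ^ s ≤ x ^ s + y ^ s + z ^ s := by
    have := Real.rpow_nonneg hx s
    have := Real.rpow_nonneg hy s
    have := Real.rpow_nonneg hz s
    rcases max_choice x (max y z) with h | h
    · rw [h]; linarith
    · rcases max_choice y z with h' | h' <;> rw [h, h'] <;> linarith
  calc (x + y + z) ^ s ≤ (3 * max x (max y z)) ^ s := by
        gcongr
        linarith [le_max_left x (max y z), le_max_left y z, le_max_right y z,
          le_max_right x (max y z)]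
    _ = 3 ^ s * max x (max y z) ^ s := Real.mul_rpow (by norm_num) (by positivity)
    _ ≤ _ := by gcongr

/-- `⟨n⟩ ^ s` for the Japanese bracket `⟨n⟩ = √(1 + n²)`. -/
noncomputable def bracketPow (s : ℝ) (n : ℤ) : ℝ≥0∞ :=
  ENNReal.ofReal ((1 + (n : ℝ) ^ 2) ^ (s / 2))

theorem bracketPow_le {s : ℝ} (hs : 0 ≤ s) (k l m : ℤ) :
    bracketPow s k ≤
      ENNReal.ofReal (3 ^ s) * (bracketPow s (k - l + m) + bracketPow s l + bracketPow s m) := by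
  set S := (1 + ((k - l + m : ℤ) : ℝ) ^ 2) + (1 + (l : ℝ) ^ 2) + (1 + (m : ℝ) ^ 2)
  have hk : 1 + (k : ℝ) ^ 2 ≤ 3 * S := by
    simp only [S]
    push_cast
    nlinarith [sq_nonneg ((k : ℝ) - l + m - l), sq_nonneg ((k : ℝ) - l + m + m),
      sq_nonneg ((l : ℝ) + m)]
  have h3 : (3 : ℝ) ^ s = 3 ^ (s / 2) * 3 ^ (s / 2) := by
    rw [← Real.rpow_add (by norm_num)]; ring_nf
  simp only [bracketPow]
  rw [← ENNReal.ofReal_add (by positivity) (by positivity),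
    ← ENNReal.ofReal_add (by positivity) (by positivity), ← ENNReal.ofReal_mul (by positivity)]
  refine ENNReal.ofReal_le_ofReal ?_
  calc (1 + (k : ℝ) ^ 2) ^ (s / 2) ≤ (3 * S) ^ (s / 2) := by gcongr
    _ = 3 ^ (s / 2) * S ^ (s / 2) := Real.mul_rpow (by norm_num) (by positivity)
    _ ≤ _ := by
        rw [h3, mul_assoc]
        gcongr
        exact Real.rpow_add_add_le (by positivity) (by positivity) (by positivity) (by positivity)

theorem bracketPow_sq (s : ℝ) (n : ℤ) :
    bracketPow s n ^ 2 = ENNReal.ofReal ((1 + (n : ℝ) ^ 2) ^ s) := by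
  rw [bracketPow, ← ENNReal.ofReal_pow (by positivity), ← Real.rpow_natCast,
    ← Real.rpow_mul (by positivity)]
  norm_num

theorem bracketPow_inv_sq (s : ℝ) (n : ℤ) :
    (bracketPow s n)⁻¹ ^ 2 = ENNReal.ofReal ((1 + (n : ℝ) ^ 2) ^ (-s)) := by
  rw [← ENNReal.inv_pow, bracketPow_sq, ← ENNReal.ofReal_inv_of_pos (by positivity),
    Real.rpow_neg (by positivity)]

theorem bracketPow_mul_enorm_sq {E : Type*} [SeminormedAddGroup E] (s : ℝ) (n : ℤ) (z : E) :
    (bracketPow s n * ‖z‖ₑ) ^ 2 = ENNReal.ofReal ((1 + (n : ℝ) ^ 2) ^ s * ‖z‖ ^ 2) := by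
  rw [mul_pow, bracketPow_sq, ← ofReal_norm, ← ENNReal.ofReal_pow (norm_nonneg z),
    ← ENNReal.ofReal_mul (by positivity)]

theorem summable_one_add_sq_rpow_neg {s : ℝ} (hs : 1 / 2 < s) :
    Summable fun n : ℤ => (1 + (n : ℝ) ^ 2) ^ (-s) := by
  refine (Real.summable_abs_int_rpow (b := 2 * s) (by linarith)).of_norm_bounded_eventually ?_
  filter_upwards [Filter.eventually_cofinite_ne 0] with n hn
  have hn2 : (0 : ℝ) < (n : ℝ) ^ 2 := by positivity
  rw [Real.norm_of_nonneg (by positivity)]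
  calc (1 + (n : ℝ) ^ 2) ^ (-s) ≤ ((n : ℝ) ^ 2) ^ (-s) :=
        Real.rpow_le_rpow_of_nonpos hn2 (by linarith) (by linarith)
    _ = |(n : ℝ)| ^ (-(2 * s)) := by
        rw [← sq_abs, ← Real.rpow_natCast_mul (abs_nonneg _)]
        norm_num

theorem sq_tsum_le_mul_tsum_bracketPow_mul_sq {s : ℝ} (hs : 1 / 2 < s) (a : ℤ → ℝ≥0∞) :
    (∑' n, a n) ^ 2 ≤ ENNReal.ofReal (∑' n : ℤ, (1 + (n : ℝ) ^ 2) ^ (-s)) *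
      ∑' n, (bracketPow s n * a n) ^ 2 := by
  have hv₀ : ∀ n, bracketPow s n ≠ 0 := fun n => by
    simp only [bracketPow, ne_eq, ENNReal.ofReal_eq_zero, not_le]
    positivity
  have := ENNReal.sq_tsum_le_tsum_inv_sq_mul_tsum_mul_sq a (bracketPow s) hv₀
    fun _ => ENNReal.ofReal_ne_top
  rwa [tsum_congr (bracketPow_inv_sq s),
    ← ENNReal.ofReal_tsum_of_nonneg (fun _ => by positivity) (summable_one_add_sq_rpow_neg hs)]
    at this

theorem bracketPow_mul_cubicConv_le {s : ℝ} (hs : 0 ≤ s) (a : ℤ → ℝ≥0∞) (k : ℤ) :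
    bracketPow s k * cubicConv a a a k ≤ ENNReal.ofReal (3 ^ s) *
      (cubicConv (fun n => bracketPow s n * a n) a a k +
        cubicConv a (fun n => bracketPow s n * a n) a k +
          cubicConv a a (fun n => bracketPow s n * a n) k) := by
  simp only [cubicConv]
  rw [← ENNReal.tsum_mul_left, ← ENNReal.tsum_add, ← ENNReal.tsum_add, ← ENNReal.tsum_mul_left]
  refine ENNReal.tsum_le_tsum fun p => ?_
  calc bracketPow s k * (a (k - p.1 + p.2) * a p.1 * a p.2)
      ≤ ENNReal.ofReal (3 ^ s) * (bracketPow s (k - p.1 + p.2) + bracketPow s p.1 +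
          bracketPow s p.2) * (a (k - p.1 + p.2) * a p.1 * a p.2) := by
        gcongr
        exact bracketPow_le hs k p.1 p.2
    _ = _ := by ring

theorem tsum_bracketPow_mul_cubicConv_sq_le {s : ℝ} (hs : 1 / 2 < s) (a : ℤ → ℝ≥0∞) :
    ∑' k, (bracketPow s k * cubicConv a a a k) ^ 2 ≤
      ENNReal.ofReal ((3 * 3 ^ s * ∑' n : ℤ, (1 + (n : ℝ) ^ 2) ^ (-s)) ^ 2) *
        (∑' n, (bracketPow s n * a n) ^ 2) ^ 3 := by
  set b := fun n => bracketPow s n * a n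
  set A := ∑' n, a n
  set N := ∑' n, (bracketPow s n * a n) ^ 2
  set c := ENNReal.ofReal (3 ^ s)
  calc ∑' k, (bracketPow s k * cubicConv a a a k) ^ 2
      ≤ ∑' k, c ^ 2 * (3 * (cubicConv b a a k ^ 2 + cubicConv a b a k ^ 2 +
          cubicConv a a b k ^ 2)) := by
        refine ENNReal.tsum_le_tsum fun k => ?_
        grw [bracketPow_mul_cubicConv_le (by linarith), mul_pow, ENNReal.add_add_sq_le]
    _ = c ^ 2 * 3 * (∑' k, cubicConv b a a k ^ 2 + ∑' k, cubicConv a b a k ^ 2 +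
          ∑' k, cubicConv a a b k ^ 2) := by
        rw [ENNReal.tsum_mul_left, ENNReal.tsum_mul_left, ENNReal.tsum_add, ENNReal.tsum_add,
          mul_assoc]
    _ ≤ c ^ 2 * 3 * (N * A ^ 2 * A ^ 2 + A ^ 2 * N * A ^ 2 + A ^ 2 * A ^ 2 * N) := by
        gcongr
        exacts [tsum_cubicConv_sq_le_fst .., tsum_cubicConv_sq_le_snd ..,
          tsum_cubicConv_sq_le_thd ..]
    _ = 9 * c ^ 2 * (A ^ 2) ^ 2 * N := by ring
    _ ≤ 9 * c ^ 2 * (ENNReal.ofReal (∑' n : ℤ, (1 + (n : ℝ) ^ 2) ^ (-s)) * N) ^ 2 * N := by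
        grw [sq_tsum_le_mul_tsum_bracketPow_mul_sq hs]
    _ = _ := by
        rw [ENNReal.ofReal_pow (by positivity), ENNReal.ofReal_mul (by positivity),
          ENNReal.ofReal_mul (by positivity), ENNReal.ofReal_ofNat]
        ring

theorem norm_exp_div_I_mul_intCast_le_one (t : ℝ) {φ : ℤ} (hφ : φ ≠ 0) :
    ‖exp (I * t * φ) / (I * φ)‖ ≤ 1 := by
  have h : ‖exp (I * t * φ)‖ = 1 := by
    rw [mul_comm I, mul_right_comm, ← ofReal_intCast, ← ofReal_mul]
    exact norm_exp_ofReal_mul_I _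
  rw [norm_div, h, norm_mul, norm_I, one_mul, norm_intCast]
  exact div_le_one_of_le₀ (mod_cast Int.one_le_abs hφ) (abs_nonneg _)

theorem enorm_FoscCoeff_le (W : ℤ → ℂ) (t : ℝ) (k : ℤ) :
    ‖FoscCoeff W t k‖ₑ ≤ cubicConv (‖W ·‖ₑ) (‖W ·‖ₑ) (‖W ·‖ₑ) k := by
  refine enorm_tsum_le_tsum_enorm.trans (ENNReal.tsum_le_tsum fun p => ?_)
  dsimp only
  split_ifs with hφ
  · rw [enorm_mul, enorm_mul, enorm_mul, enorm_neg, RCLike.enorm_conj]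
    calc _ ≤ 1 * ‖W (k - p.1 + p.2)‖ₑ * ‖W p.1‖ₑ * ‖W p.2‖ₑ := by
          gcongr
          rw [← ofReal_norm]
          exact ENNReal.ofReal_le_one.mpr (norm_exp_div_I_mul_intCast_le_one t hφ)
      _ = _ := by rw [one_mul]
  · simp

/-- First estimate of Lemma 3.3: `‖F_osc(W,t)‖_{Hˢ(𝕋)} ≤ C_s ‖W‖_{Hˢ(𝕋)}³`,
uniformly in `t`, for `s > 1/2`. -/
theorem Fosc_Hs_bound_torus (s : ℝ) (hs : 1 / 2 < s) :
    ∃ C : ℝ, 0 < C ∧ ∀ (W : ℤ → ℂ) (t : ℝ),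
      Summable (fun k : ℤ => (1 + (k : ℝ) ^ 2) ^ s * ‖W k‖ ^ 2) →
      (∀ k : ℤ, Summable fun p : ℤ × ℤ =>
        ‖W (k - p.1 + p.2)‖ * ‖W p.1‖ * ‖W p.2‖) →
      Real.sqrt (∑' k : ℤ, (1 + (k : ℝ) ^ 2) ^ s * ‖FoscCoeff W t k‖ ^ 2) ≤
        C * Real.sqrt (∑' k : ℤ, (1 + (k : ℝ) ^ 2) ^ s * ‖W k‖ ^ 2) ^ 3 := by
  have hZ : 0 < ∑' n : ℤ, (1 + (n : ℝ) ^ 2) ^ (-s) :=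
    (summable_one_add_sq_rpow_neg hs).tsum_pos (fun _ => by positivity) 0 (by positivity)
  set C := 3 * 3 ^ s * ∑' n : ℤ, (1 + (n : ℝ) ^ 2) ^ (-s)
  refine ⟨C, by positivity, fun W t hW _ => ?_⟩
  set X := ∑' k : ℤ, (1 + (k : ℝ) ^ 2) ^ s * ‖W k‖ ^ 2
  have hX : 0 ≤ X := tsum_nonneg fun _ => by positivity
  have hsum : ∑' k : ℤ, ENNReal.ofReal ((1 + (k : ℝ) ^ 2) ^ s * ‖FoscCoeff W t k‖ ^ 2) ≤
      ENNReal.ofReal (C ^ 2 * X ^ 3) := by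
    simp only [← bracketPow_mul_enorm_sq]
    calc _ ≤ ∑' k, (bracketPow s k * cubicConv (‖W ·‖ₑ) (‖W ·‖ₑ) (‖W ·‖ₑ) k) ^ 2 :=
          ENNReal.tsum_le_tsum fun k => by grw [enorm_FoscCoeff_le]
      _ ≤ _ := tsum_bracketPow_mul_cubicConv_sq_le hs _
      _ = _ := by
          simp only [bracketPow_mul_enorm_sq]
          rw [← ENNReal.ofReal_tsum_of_nonneg (fun _ => by positivity) hW,
            ← ENNReal.ofReal_pow hX, ← ENNReal.ofReal_mul (by positivity)]
  have hX3 : X ^ 3 = (Real.sqrt X ^ 3) ^ 2 := by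
    rw [← pow_mul, mul_comm, pow_mul, Real.sq_sqrt hX]
  calc _ ≤ Real.sqrt (C ^ 2 * X ^ 3) :=
        Real.sqrt_le_sqrt (ENNReal.tsum_le_of_tsum_ofReal_le (fun _ => by positivity)
          (by positivity) hsum)
    _ = C * Real.sqrt X ^ 3 := by rw [hX3, ← mul_pow, Real.sqrt_sq (by positivity)]
end
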